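/- A left R-module M is lifting if and only if for every submodule X of M there is a decomposition M = A ⊕ B with A ⊆ X, X ∩ B ⊆ Rad(B), and X ∩ B PSD in B. -/

import Mathlib

open Submodule Function

/-- A submodule `N` of `M` is PSD in `M` if whenever `N + X = M`, there is a
projective direct summand `S` of `M` with `S ≤ N` and `M = S ⊕ X`. -/
def IsPSD (R : Type*) [Ring R] {M : Type*} [AddCommGroup M] [Module R M]
    (N : Submodule R M) : Prop :=
  ∀ X : Submodule R M, N ⊔ X = ⊤ →
    ∃ S : Submodule R M, S ≤ N ∧ Module.Projective R ↥S ∧ IsCompl S X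

/-- `N` is small in `M`: `N + L = M` implies `L = M`. -/
def IsSmallSub (R : Type*) [Ring R] {M : Type*} [AddCommGroup M] [Module R M]
    (N : Submodule R M) : Prop :=
  ∀ L : Submodule R M, N ⊔ L = ⊤ → L = ⊤

/-- The (Jacobson) radical of a module: intersection of all maximal submodules. -/
def radM (R M : Type*) [Ring R] [AddCommGroup M] [Module R M] : Submodule R M :=
  sInf {m : Submodule R M | IsCoatom m}

/-- `M` is supplemented: every submodule `X` has a submodule `Y` with `X + Y = M`
and `X ∩ Y` small in `Y`. -/
def IsSupplemented (R M : Type*) [Ring R] [AddCommGroup M] [Module R M] : Prop :=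
  ∀ X : Submodule R M, ∃ Y : Submodule R M, X ⊔ Y = ⊤ ∧
    IsSmallSub R (Submodule.comap Y.subtype X)

/-- `M` is lifting: every submodule `N` admits a decomposition `M = A ⊕ B` with
`A ≤ N` and `N ∩ B` small in `B`. -/
def IsLifting (R M : Type*) [Ring R] [AddCommGroup M] [Module R M] : Prop :=
  ∀ N : Submodule R M, ∃ A B : Submodule R M, IsCompl A B ∧ A ≤ N ∧
    IsSmallSub R (Submodule.comap B.subtype N)

/-- `Y` is an `I`-supplement of `X` in `M`: `X + Y = M`, `X ∩ Y ⊆ IY`, and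
`X ∩ Y` is PSD in `Y`. -/
def IsISupplementOf {R : Type*} [Ring R] {M : Type*} [AddCommGroup M] [Module R M]
    (I : Ideal R) (Y X : Submodule R M) : Prop :=
  X ⊔ Y = ⊤ ∧ X ⊓ Y ≤ I • Y ∧ IsPSD R (Submodule.comap Y.subtype X)

/-- `M` is `I`-supplemented: every submodule has an `I`-supplement in `M`. -/
def IsISupplemented {R : Type*} [Ring R] (I : Ideal R) (M : Type*)
    [AddCommGroup M] [Module R M] : Prop :=
  ∀ X : Submodule R M, ∃ Y : Submodule R M, IsISupplementOf I Y X

/-!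
A small submodule lies in the radical, and it is PSD because the only summand ever needed is `0`.
Conversely, let `N ≤ Rad B` be PSD in `B` and `N + L = B`. The projective summand `S ≤ N` with
`B = S ⊕ L` lies in `Rad B`, and projecting onto `S` gives `Rad S = S`. By Bass's lemma a projective
module equal to its radical is zero: with a dual basis `s`, the coefficients `c = s x` of any `x`
satisfy `c = c B` for a finite square matrix `B` over the Jacobson radical of `R`, and this
system is solved by eliminating one variable at a time, `1 - b` being a unit for `b` in the
radical. Hence `S = 0` and `L = B`, i.e. `N` is small.
-/

section Jacobson

variable {R : Type*} [Ring R]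

theorem isUnit_one_sub_of_mem_jacobson {a : R} (ha : a ∈ Ring.jacobson R) :
    IsUnit (1 - a) := by
  have left_inv : ∀ b ∈ Ring.jacobson R, ∃ z : R, z * (1 - b) = 1 := fun b hb => by
    obtain ⟨z, hz⟩ := Ideal.mem_jacobson_iff.mp (Ideal.jacobson_bot (R := R) ▸ hb) (-1)
    exact ⟨z, by rw [Ideal.mem_bot] at hz; rw [← sub_eq_zero, ← hz]; noncomm_ring⟩
  obtain ⟨z, hz⟩ := left_inv a ha
  -- `z = 1 + z * a` is itself left invertible, and its left inverse must be `1 - a`.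
  obtain ⟨w, hw⟩ := left_inv (-(z * a)) (neg_mem (Ideal.mul_mem_left _ z ha))
  have hwz : w * z = 1 := by
    rw [← hw]; congr 1; rw [← sub_eq_zero, ← sub_eq_zero.mpr hz]; noncomm_ring
  have hw_eq : w = 1 - a := by
    calc w = w * (z * (1 - a)) := by rw [hz, mul_one]
      _ = 1 - a := by rw [← mul_assoc, hwz, one_mul]
  exact ⟨⟨1 - a, z, hw_eq ▸ hwz, hz⟩, rfl⟩

theorem eq_zero_of_eq_sum_mul_of_mem_jacobson {ι : Type*} [DecidableEq ι] (T : Finset ι)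
    {c : ι → R} {b : ι → ι → R} (hb : ∀ p q, b p q ∈ Ring.jacobson R)
    (hc : ∀ q ∈ T, c q = ∑ p ∈ T, c p * b p q) : ∀ q ∈ T, c q = 0 := by
  induction T using Finset.induction_on generalizing b with
  | empty => simp
  | @insert a s ha ih =>
    obtain ⟨u, hu⟩ := isUnit_one_sub_of_mem_jacobson (hb a a)
    -- solve the `a`-th equation for `c a` and substitute it into the others
    have hca : c a = (∑ p ∈ s, c p * b p a) * ↑u⁻¹ := by
      rw [Units.eq_mul_inv_iff_mul_eq, hu, mul_sub, mul_one, sub_eq_iff_eq_add]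
      conv_lhs => rw [hc a (Finset.mem_insert_self a s), Finset.sum_insert ha, add_comm]
    have hs := ih (b := fun p q => b p q + b p a * (↑u⁻¹ * b a q))
      (fun p q => add_mem (hb p q) (Ideal.mul_mem_right _ _ (hb p a))) fun q hq => by
        rw [hc q (Finset.mem_insert_of_mem hq), Finset.sum_insert ha, hca, Finset.sum_mul,
          Finset.sum_mul, ← Finset.sum_add_distrib]
        exact Finset.sum_congr rfl fun p _ => by noncomm_ring
    have ha0 : c a = 0 := by
      rw [hca, Finset.sum_eq_zero fun p hp => by rw [hs p hp, zero_mul], zero_mul]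
    simpa [ha0] using hs

theorem Module.Projective.subsingleton_of_jacobson_eq_top {P : Type*} [AddCommGroup P]
    [Module R P] [Module.Projective R P] (h : Module.jacobson R P = ⊤) : Subsingleton P := by
  classical
  obtain ⟨s, hs⟩ := Module.projective_def.mp ‹Module.Projective R P›
  have coord_mem : ∀ p q, s p q ∈ Ring.jacobson R := fun p q =>
    Module.map_jacobson_le (Finsupp.lapply q ∘ₗ s) ⟨p, h ▸ mem_top, rfl⟩
  refine subsingleton_of_forall_eq 0 fun x => ?_
  -- apply `s` to `x = ∑ p, s x p • p`
  have hsx : ∀ q, s x q = ∑ p ∈ (s x).support, s x p * s p q := fun q => by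
    conv_lhs => rw [← hs x]
    simp [Finsupp.linearCombination_apply, Finsupp.sum, map_sum, Finsupp.finsetSum_apply]
  have hzero := eq_zero_of_eq_sum_mul_of_mem_jacobson _ coord_mem fun q _ => hsx q
  have : s x = 0 := Finsupp.support_eq_empty.mp <|
    Finset.eq_empty_of_forall_notMem fun q hq => Finsupp.mem_support_iff.mp hq (hzero q hq)
  rw [← hs x, this, map_zero]

end Jacobson

section Radical

variable {R M : Type*} [Ring R] [AddCommGroup M] [Module R M]

theorem radM_eq_jacobson : radM R M = Module.jacobson R M := rfl

theorem jacobson_eq_top_of_isCompl_of_le_jacobson {S L : Submodule R M} (hSL : IsCompl S L)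
    (hS : S ≤ Module.jacobson R M) : Module.jacobson R S = ⊤ :=
  eq_top_iff.mpr fun x _ =>
    Module.map_jacobson_le (S.projectionOnto L hSL)
      ⟨x, hS x.2, projectionOnto_apply_left hSL x⟩

theorem eq_bot_of_isCompl_of_le_jacobson {S L : Submodule R M} [Module.Projective R S]
    (hSL : IsCompl S L) (hS : S ≤ Module.jacobson R M) : S = ⊥ :=
  have := Module.Projective.subsingleton_of_jacobson_eq_top
    (jacobson_eq_top_of_isCompl_of_le_jacobson hSL hS)
  eq_bot_of_subsingleton

theorem IsSmallSub.le_radM {N : Submodule R M} (h : IsSmallSub R N) : N ≤ radM R M :=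
  le_sInf fun m hm => by_contra fun hNm => hm.1 (h m (hm.2 _ (right_lt_sup.mpr hNm)))

theorem IsSmallSub.isPSD {N : Submodule R M} (h : IsSmallSub R N) : IsPSD R N := fun L hL =>
  ⟨⊥, bot_le, inferInstance, h L hL ▸ isCompl_bot_top⟩

theorem IsPSD.isSmallSub_of_le_radM {N : Submodule R M} (hN : IsPSD R N)
    (hrad : N ≤ radM R M) : IsSmallSub R N := fun L hL => by
  obtain ⟨S, hSN, hS, hSL⟩ := hN L hL
  rw [radM_eq_jacobson] at hrad
  rw [eq_bot_of_isCompl_of_le_jacobson hSL (hSN.trans hrad)] at hSL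
  exact eq_top_of_bot_isCompl hSL

end Radical

theorem stmt8 {R M : Type*} [Ring R] [AddCommGroup M] [Module R M] :
    IsLifting R M ↔
      ∀ X : Submodule R M, ∃ A B : Submodule R M, IsCompl A B ∧ A ≤ X ∧
        Submodule.comap B.subtype X ≤ radM R ↥B ∧
        IsPSD R (Submodule.comap B.subtype X) := by
  refine forall_congr' fun X => exists₂_congr fun A B =>
    and_congr_right fun _ => and_congr_right fun _ => ?_
  exact ⟨fun h => ⟨h.le_radM, h.isPSD⟩, fun ⟨hrad, hpsd⟩ => hpsd.isSmallSub_of_le_radM hrad⟩
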